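/- Global attractivity of the trivial solution under strong damping: if (b + c)·(|k₀| + |d_k|) < d, then every solution h of the forced ENSO model defined on a half-line [t₀ − τ₂, ∞) satisfies h(t) → 0 as t → ∞. -/

import Mathlib

/-!
Let `K = |k₀| + |d_k|`. Since `|G y| ≤ |y|` and `|κ| ≤ K`, the delayed feedback at time `t` is at
most `(b + c) K` times the maximum of `|h|` over the last `max τ₁ τ₂` time units, while the
damping is `d > (b + c) K`. This is a Halanay-type inequality: for small `γ > 0` the envelope
`B e^{-γ t}` still satisfies `(b + c) K e^{γ max τ₁ τ₂} < d - γ`, so `|h|` can never reach the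
envelope for the first time, because at such a time `h` would have to cross it with a slope at
least that of the envelope.
-/

open Set Filter Topology Real

theorem Real.abs_sinh_le_abs_mul_cosh (x : ℝ) : |sinh x| ≤ |x| * cosh x := by
  have hmvt := norm_image_sub_le_of_norm_deriv_le_segment' (f := sinh) (C := cosh |x|)
    (fun y _ => (hasDerivAt_sinh y).hasDerivWithinAt)
    (fun y hy => by
      rw [norm_eq_abs, abs_of_pos (cosh_pos y), cosh_le_cosh, abs_of_nonneg hy.1, abs_abs]
      exact hy.2.le)
    |x| ⟨abs_nonneg x, le_rfl⟩
  rw [sinh_zero, sub_zero, sub_zero, norm_eq_abs, cosh_abs] at hmvt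
  rw [abs_sinh]
  linarith [le_abs_self (sinh |x|)]

theorem Real.abs_tanh_le_abs (x : ℝ) : |tanh x| ≤ |x| := by
  rw [tanh_eq_sinh_div_cosh, abs_div, abs_of_pos (cosh_pos x), div_le_iff₀ (cosh_pos x)]
  exact abs_sinh_le_abs_mul_cosh x

theorem abs_mul_tanh_div_le (s x : ℝ) : |s * tanh (x / s)| ≤ |x| := by
  rcases eq_or_ne s 0 with rfl | hs
  · simp
  calc |s * tanh (x / s)| ≤ |s| * |x / s| := by
        rw [abs_mul]; exact mul_le_mul_of_nonneg_left (abs_tanh_le_abs _) (abs_nonneg s)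
    _ = |x| := by rw [abs_div]; field_simp

theorem abs_add_mul_sin_le (k₀ dk θ : ℝ) : |k₀ + dk * sin θ| ≤ |k₀| + |dk| := by
  calc |k₀ + dk * sin θ| ≤ |k₀| + |dk| * |sin θ| := by rw [← abs_mul]; exact abs_add_le _ _
    _ ≤ |k₀| + |dk| * 1 := by gcongr; exact abs_sin_le_one θ
    _ = |k₀| + |dk| := by rw [mul_one]

theorem HasDerivAt.le_of_first_touch {u φ : ℝ → ℝ} {u' φ' s c : ℝ} (hu : HasDerivAt u u' c)
    (hφ : HasDerivAt φ φ' c) (hsc : s < c) (hbelow : ∀ r ∈ Ioo s c, u r < φ r)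
    (htouch : φ c ≤ u c) : φ' ≤ u' := by
  have hslope : Tendsto (slope (u - φ) c) (𝓝[<] c) (𝓝 (u' - φ')) :=
    (hasDerivAt_iff_tendsto_slope.1 (hu.sub hφ)).mono_left
      (nhdsWithin_mono _ fun _ hr => ne_of_lt hr)
  refine sub_nonneg.1 (ge_of_tendsto hslope ?_)
  filter_upwards [Ioo_mem_nhdsLT hsc] with r hr
  rw [slope_def_field]
  exact div_nonneg_of_nonpos (by simp only [Pi.sub_apply]; linarith [hbelow r hr])
    (by linarith [hr.2])

theorem exists_first_nonneg {g : ℝ → ℝ} {s t : ℝ} (hst : s ≤ t) (hg : ContinuousOn g (Icc s t))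
    (hs : g s < 0) (ht : 0 ≤ g t) : ∃ c ∈ Ioc s t, 0 ≤ g c ∧ ∀ r ∈ Ico s c, g r < 0 := by
  set S := Icc s t ∩ g ⁻¹' Ici 0
  have hSclosed : IsClosed S := hg.preimage_isClosed_of_isClosed isClosed_Icc isClosed_Ici
  have hSbdd : BddBelow S := ⟨s, fun x hx => hx.1.1⟩
  have htS : t ∈ S := ⟨⟨hst, le_rfl⟩, ht⟩
  obtain ⟨⟨hsc, hct⟩, hc⟩ := hSclosed.csInf_mem ⟨t, htS⟩ hSbdd
  refine ⟨sInf S, ⟨lt_of_le_of_ne hsc ?_, hct⟩, hc, fun r hr => not_le.1 fun hr0 => ?_⟩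
  · rintro hsc; rw [← hsc] at hc; exact absurd hc (not_le.2 hs)
  · exact (csInf_le hSbdd ⟨⟨hr.1, hr.2.le.trans hct⟩, hr0⟩).not_gt hr.2

theorem abs_lt_of_first_touch {h F φ φ' : ℝ → ℝ} {d s t₁ : ℝ} (hd : 0 ≤ d) (hs : s ≤ t₁)
    (hcont : ContinuousOn h (Ici s)) (hφ : ∀ t, HasDerivAt φ (φ' t) t)
    (hinit : ∀ t ∈ Icc s t₁, |h t| < φ t) (hde : ∀ t > t₁, HasDerivAt h (F t - d * h t) t)
    (hF : ∀ t > t₁, (∀ r ∈ Ico s t, |h r| < φ r) → |F t| < d * φ t + φ' t) :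
    ∀ t ≥ s, |h t| < φ t := by
  intro t hst
  by_contra! hreach
  have hgcont : ContinuousOn (fun r => |h r| - φ r) (Icc s t) :=
    (hcont.mono Icc_subset_Ici_self).abs.sub fun r _ => (hφ r).continuousAt.continuousWithinAt
  obtain ⟨c, ⟨hsc, -⟩, hc, hbefore⟩ := exists_first_nonneg hst hgcont
    (sub_neg.2 (hinit s ⟨le_rfl, hs⟩)) (sub_nonneg.2 hreach)
  have hpast : ∀ r ∈ Ico s c, |h r| < φ r := fun r hr => sub_neg.1 (hbefore r hr)
  have hc₁ : t₁ < c := not_le.1 fun hct₁ => (sub_nonneg.1 hc).not_gt (hinit c ⟨hsc.le, hct₁⟩)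
  have hFc := hF c hc₁ hpast
  have hbelow (r) (hr : r ∈ Ioo s c) := abs_lt.1 (hpast r (Ioo_subset_Ico_self hr))
  rcases le_or_gt 0 (h c) with hpos | hneg
  · have htouch : φ c ≤ h c := by linarith [abs_of_nonneg hpos]
    have := (hde c hc₁).le_of_first_touch (hφ c) hsc (fun r hr => (hbelow r hr).2) htouch
    nlinarith [le_abs_self (F c)]
  · have htouch : φ c ≤ -h c := by linarith [abs_of_neg hneg]
    have := (hde c hc₁).neg.le_of_first_touch (hφ c) hsc
      (fun r hr => by simp only [Pi.neg_apply]; linarith [(hbelow r hr).1]) htouch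
    nlinarith [neg_abs_le (F c)]

theorem exists_pos_mul_exp_add_lt {a d τ : ℝ} (had : a < d) :
    ∃ γ > 0, a * exp (γ * τ) + γ < d := by
  have hcont : Tendsto (fun γ => a * exp (γ * τ) + γ) (𝓝[>] 0) (𝓝 a) := by
    have : Continuous fun γ => a * exp (γ * τ) + γ := by fun_prop
    simpa using this.tendsto 0 |>.mono_left nhdsWithin_le_nhds
  exact ((hcont.eventually_lt_const had).and self_mem_nhdsWithin).exists.imp
    fun γ hγ => ⟨hγ.2, hγ.1⟩

theorem exists_abs_lt_exp_of_delay_damping {h F : ℝ → ℝ} {a d τ t₀ : ℝ} (hτ : 0 ≤ τ)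
    (ha : 0 ≤ a) (had : a < d) (hcont : ContinuousOn h (Ici (t₀ - τ)))
    (hde : ∀ t > t₀, HasDerivAt h (F t - d * h t) t)
    (hF : ∀ t > t₀, ∀ M, (∀ r ∈ Ico (t - τ) t, |h r| ≤ M) → |F t| ≤ a * M) :
    ∃ γ > 0, ∃ B, ∀ t ≥ t₀ - τ, |h t| < B * exp (-γ * (t - t₀)) := by
  obtain ⟨γ, hγ, hγd⟩ := exists_pos_mul_exp_add_lt (τ := τ) had
  obtain ⟨C, hC⟩ := isCompact_Icc.exists_bound_of_continuousOn
    (hcont.mono (Icc_subset_Ici_self : Icc (t₀ - τ) t₀ ⊆ _))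
  set φ := fun t => (|C| + 1) * exp (-γ * (t - t₀))
  have hφ : ∀ t, HasDerivAt φ (-γ * φ t) t := fun t => by
    have := (((hasDerivAt_id t).sub_const t₀).const_mul (-γ)).exp.const_mul (|C| + 1)
    exact this.congr_deriv (by simp only [φ, id]; ring)
  have hφ_delay : ∀ t r, t - τ ≤ r → φ r ≤ exp (γ * τ) * φ t := fun t r hr => by
    simp only [φ]
    rw [mul_left_comm, ← exp_add]
    gcongr
    nlinarith
  refine ⟨γ, hγ, |C| + 1, abs_lt_of_first_touch (ha.trans had.le) (by linarith) hcont hφ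
    (fun t ht => ?_) hde fun t ht hpast => ?_⟩
  · calc |h t| ≤ |C| := (hC t ht).trans (le_abs_self C)
      _ < (|C| + 1) * 1 := by linarith
      _ ≤ (|C| + 1) * exp (-γ * (t - t₀)) := by gcongr; exact one_le_exp (by nlinarith [ht.2])
  · have hbound := hF t ht (exp (γ * τ) * φ t) fun r hr =>
      ((hpast r ⟨by linarith [hr.1], hr.2⟩).trans_le (hφ_delay t r hr.1)).le
    have hφpos : 0 < φ t := by positivity
    nlinarith

theorem tendsto_zero_of_delay_damping {h F : ℝ → ℝ} {a d τ t₀ : ℝ} (hτ : 0 ≤ τ)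
    (ha : 0 ≤ a) (had : a < d) (hcont : ContinuousOn h (Ici (t₀ - τ)))
    (hde : ∀ t > t₀, HasDerivAt h (F t - d * h t) t)
    (hF : ∀ t > t₀, ∀ M, (∀ r ∈ Ico (t - τ) t, |h r| ≤ M) → |F t| ≤ a * M) :
    Tendsto h atTop (𝓝 0) := by
  obtain ⟨γ, hγ, B, hB⟩ := exists_abs_lt_exp_of_delay_damping hτ ha had hcont hde hF
  refine squeeze_zero_norm' (a := fun t => B * exp (-γ * (t - t₀))) ?_ ?_
  · filter_upwards [eventually_ge_atTop (t₀ - τ)] with t ht using (hB t ht).le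
  · have : Tendsto (fun t => -γ * (t - t₀)) atTop atBot :=
      (tendsto_atTop_add_const_right _ _ tendsto_id).const_mul_atTop_of_neg (neg_neg_of_pos hγ)
    simpa using (tendsto_exp_atBot.comp this).const_mul B

theorem abs_sub_delayed_feedback_le {G κ : ℝ → ℝ} {K b c M x₁ x₂ t₁ t₂ : ℝ} (hb : 0 ≤ b)
    (hc : 0 ≤ c) (hG : ∀ y, |G y| ≤ |y|) (hκ : ∀ t, |κ t| ≤ K) (hx₁ : |x₁| ≤ M)
    (hx₂ : |x₂| ≤ M) : |b * G (κ t₁ * x₁) - c * G (κ t₂ * x₂)| ≤ (b + c) * K * M := by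
  have hGκ (t x : ℝ) (hx : |x| ≤ M) : |G (κ t * x)| ≤ K * M :=
    (hG _).trans (abs_mul (κ t) x ▸
      mul_le_mul (hκ t) hx (abs_nonneg x) ((abs_nonneg _).trans (hκ t)))
  calc |b * G (κ t₁ * x₁) - c * G (κ t₂ * x₂)|
      ≤ b * |G (κ t₁ * x₁)| + c * |G (κ t₂ * x₂)| := by
        simpa only [abs_mul, abs_of_nonneg hb, abs_of_nonneg hc] using
          abs_sub (b * G (κ t₁ * x₁)) (c * G (κ t₂ * x₂))
    _ ≤ b * (K * M) + c * (K * M) := by gcongr <;> exact hGκ _ _ ‹_›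
    _ = (b + c) * K * M := by ring

theorem enso_global_attractivity_general (b c d τ₁ τ₂ bp bm k₀ dk ω t₀ : ℝ)
    (hb : 0 < b) (hc : 0 < c) (hτ₁ : 0 < τ₁) (hτ₂ : 0 < τ₂)
    (G : ℝ → ℝ)
    (hG : ∀ x : ℝ, G x =
      if 0 ≤ x then bp * Real.tanh (x / bp) else bm * Real.tanh (x / bm))
    (κ : ℝ → ℝ) (hκ : ∀ t : ℝ, κ t = k₀ + dk * Real.sin (ω * t))
    (hdamp : (b + c) * (|k₀| + |dk|) < d)
    (h : ℝ → ℝ) (hcont : ContinuousOn h (Set.Ici (t₀ - τ₂)))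
    (hde : ∀ t : ℝ, t₀ < t → HasDerivAt h
      (b * G (κ (t - τ₁) * h (t - τ₁)) - c * G (κ (t - τ₂) * h (t - τ₂))
        - d * h t) t) :
    Filter.Tendsto h Filter.atTop (nhds 0) := by
  have hGle (x : ℝ) : |G x| ≤ |x| := by
    rw [hG]; split_ifs <;> exact abs_mul_tanh_div_le _ _
  have hκle (t : ℝ) : |κ t| ≤ |k₀| + |dk| := hκ t ▸ abs_add_mul_sin_le _ _ _
  set τ := max τ₁ τ₂
  refine tendsto_zero_of_delay_damping (τ := τ) (t₀ := t₀ + τ)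
    (F := fun t => b * G (κ (t - τ₁) * h (t - τ₁)) - c * G (κ (t - τ₂) * h (t - τ₂)))
    (le_max_of_le_left hτ₁.le) (by positivity) hdamp (hcont.mono (Ici_subset_Ici.2 (by linarith))) ?_ ?_
  · exact fun t ht => hde t (by linarith [le_max_left τ₁ τ₂])
  · intro t _ M hM
    have hdelay (τᵢ : ℝ) (hpos : 0 < τᵢ) (hle : τᵢ ≤ τ) : |h (t - τᵢ)| ≤ M :=
      hM _ ⟨by linarith, by linarith⟩
    exact abs_sub_delayed_feedback_le hb.le hc.le hGle hκle
      (hdelay τ₁ hτ₁ (le_max_left _ _)) (hdelay τ₂ hτ₂ (le_max_right _ _))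

/-- Global attractivity of the trivial solution under strong damping: if
`(b+c)(|k₀|+|d_k|) < d`, then every solution `h` of the forced ENSO model
defined on a half-line `[t₀−τ₂, ∞)` satisfies `h(t) → 0` as `t → ∞`. -/
theorem enso_global_attractivity (b c d τ₁ τ₂ bp bm k₀ dk ω t₀ : ℝ)
    (hb : 0 < b) (hc : 0 < c) (hd : 0 < d) (hτ₁ : 0 < τ₁) (hτ₂ : 0 < τ₂)
    (hbp : 0 < bp) (hbm : bm < 0)
    (G : ℝ → ℝ)
    (hG : ∀ x : ℝ, G x =
      if 0 ≤ x then bp * Real.tanh (x / bp) else bm * Real.tanh (x / bm))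
    (κ : ℝ → ℝ) (hκ : ∀ t : ℝ, κ t = k₀ + dk * Real.sin (ω * t))
    (hdamp : (b + c) * (|k₀| + |dk|) < d)
    (h : ℝ → ℝ) (hcont : ContinuousOn h (Set.Ici (t₀ - τ₂)))
    (hde : ∀ t : ℝ, t₀ < t → HasDerivAt h
      (b * G (κ (t - τ₁) * h (t - τ₁)) - c * G (κ (t - τ₂) * h (t - τ₂))
        - d * h t) t) :
    Filter.Tendsto h Filter.atTop (nhds 0) :=
  enso_global_attractivity_general b c d τ₁ τ₂ bp bm k₀ dk ω t₀ hb hc hτ₁ hτ₂ G hG κ hκ hdamp h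
    hcont hde
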